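/- arXiv:2502.13186 — 7 statements merged into one kernel-verified Lean document; each statement's English description precedes it below -/
import Mathlib

section
/- Lower bound for Exp3-IX probabilities: Let ε ∈ (0, 1/K) and R > 0, and suppose η, γ ∈ [0, R]. Let T_ε = min( ⌊(1/K − ε)√n / R⌋, n ). Then for every t ≤ T_ε and every action a ∈ [K], the Exp3-IX probability satisfies π_t^θ(a) ≥ ε, for any sequences of losses in [0,1] and actions in [K]. -/
/-- Softmax distribution associated with a score vector. -/
noncomputable def softmax {ι : Type*} [Fintype ι] (h : ι → ℝ) (a : ι) : ℝ :=
  Real.exp (h a) / ∑ b, Real.exp (h b)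

/-- Cumulative estimated losses `G t b = Σ_{s=1}^t ĝ_{b,s}` of the `Exp3-IX`
algorithm with learning rate `η/√n` and exploration `γ/√n`, where
`ĝ_{b,s} = g_{b,s} 1{A_s = b} / (γ/√n + π_s(b))`. -/
noncomputable def exp3ixG (n K : ℕ) (g : Fin K → ℕ → ℝ) (A : ℕ → Fin K)
    (η γ : ℝ) : ℕ → Fin K → ℝ
  | 0 => fun _ => 0
  | (t + 1) => fun b =>
      exp3ixG n K g A η γ t b +
        (if A (t + 1) = b then g b (t + 1) else 0) /
          (γ / Real.sqrt n +
            softmax (fun c => -(η / Real.sqrt n) * exp3ixG n K g A η γ t c) b)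

/-- The `Exp3-IX` action probabilities: `π_1` is uniform and
`π_{t+1} = softmax(−(η/√n) Σ_{s≤t} ĝ_{·,s})`. -/
noncomputable def exp3ixPi (n K : ℕ) (g : Fin K → ℕ → ℝ) (A : ℕ → Fin K)
    (η γ : ℝ) (t : ℕ) : Fin K → ℝ :=
  softmax (fun c => -(η / Real.sqrt n) * exp3ixG n K g A η γ (t - 1) c)

lemma softmax_pos {ι : Type*} [Fintype ι] [Nonempty ι] (h : ι → ℝ) (a : ι) :
    0 < softmax h a :=
  div_pos (Real.exp_pos _) (Finset.sum_pos (fun _ _ => Real.exp_pos _) Finset.univ_nonempty)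

section helpers

variable {K : ℕ} {n : ℕ} {g : Fin K → ℕ → ℝ} {A : ℕ → Fin K} {η γ : ℝ}

lemma exp3ixG_nonneg (hK : 0 < K) (hγ : 0 ≤ γ) (hg : ∀ a t, 0 ≤ g a t) :
    ∀ t b, 0 ≤ exp3ixG n K g A η γ t b
  | 0, b => le_rfl
  | (t+1), b => by
      haveI : Nonempty (Fin K) := Fin.pos_iff_nonempty.mp hK
      refine add_nonneg (exp3ixG_nonneg hK hγ hg t b) (div_nonneg ?_ ?_)
      · split
        · exact hg _ _
        · exact le_rfl
      · exact add_nonneg (div_nonneg hγ (Real.sqrt_nonneg _)) (softmax_pos _ _).le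

lemma exp3ix_step (hK : 0 < K) (hg : ∀ a t, g a t ∈ Set.Icc (0:ℝ) 1)
    (hη : 0 ≤ η) (hγ : 0 ≤ γ) (t : ℕ) (a : Fin K) :
    exp3ixPi n K g A η γ (t+1) a - η / Real.sqrt n ≤ exp3ixPi n K g A η γ (t+2) a := by
  haveI : Nonempty (Fin K) := Fin.pos_iff_nonempty.mp hK
  have hc0 : 0 ≤ η / Real.sqrt n := div_nonneg hη (Real.sqrt_nonneg _)
  set c : ℝ := η / Real.sqrt n with hc
  set G : ℕ → Fin K → ℝ := exp3ixG n K g A η γ with hG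
  set π1 : Fin K → ℝ := softmax (fun b => -c * G t b) with hπ1
  have hπ1pos : ∀ b, 0 < π1 b := fun b => softmax_pos _ b
  set D : Fin K → ℝ := fun b => γ / Real.sqrt n + π1 b with hD
  have hDpos : ∀ b, 0 < D b :=
    fun b => add_pos_of_nonneg_of_pos (div_nonneg hγ (Real.sqrt_nonneg _)) (hπ1pos b)
  set inc : Fin K → ℝ := fun b => (if A (t + 1) = b then g b (t + 1) else 0) / D b with hinc
  have hGsucc : ∀ b, G (t+1) b = G t b + inc b := fun b => rfl
  have hincnn : ∀ b, 0 ≤ inc b := by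
    intro b
    refine div_nonneg ?_ (hDpos b).le
    split
    · exact (hg _ _).1
    · exact le_rfl
  have e1 : exp3ixPi n K g A η γ (t+1) a = π1 a := rfl
  have e2 : exp3ixPi n K g A η γ (t+2) a = softmax (fun b => -c * G (t+1) b) a := rfl
  set Z1 : ℝ := ∑ b, Real.exp (-c * G t b) with hZ1
  set Z2 : ℝ := ∑ b, Real.exp (-c * G (t+1) b) with hZ2
  have hZ1pos : 0 < Z1 := Finset.sum_pos (fun _ _ => Real.exp_pos _) Finset.univ_nonempty
  have hZ2pos : 0 < Z2 := Finset.sum_pos (fun _ _ => Real.exp_pos _) Finset.univ_nonempty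
  have hZle : Z2 ≤ Z1 := by
    refine Finset.sum_le_sum fun b _ => Real.exp_le_exp.mpr ?_
    rw [hGsucc b]
    nlinarith [hincnn b, hc0]
  -- π2 ≥ exp(-c G(t+1) a)/Z1
  have h1 : Real.exp (-c * G (t+1) a) / Z1 ≤ softmax (fun b => -c * G (t+1) b) a :=
    div_le_div_of_nonneg_left (Real.exp_pos _).le hZ2pos hZle
  have h2 : Real.exp (-c * G (t+1) a) / Z1 = π1 a * Real.exp (-(c * inc a)) := by
    rw [hGsucc a, hπ1, softmax]
    rw [show -c * (G t a + inc a) = -c * G t a + -(c * inc a) by ring, Real.exp_add]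
    ring
  -- exp(-(x)) ≥ 1 - x
  have h3 : 1 - c * inc a ≤ Real.exp (-(c * inc a)) := by
    have := Real.add_one_le_exp (-(c * inc a)); linarith
  have hπinc : π1 a * inc a ≤ 1 := by
    have hnum : (if A (t + 1) = a then g a (t + 1) else 0) ≤ 1 := by
      split
      · exact (hg _ _).2
      · exact zero_le_one
    have hxd : π1 a ≤ D a := le_add_of_nonneg_left (div_nonneg hγ (Real.sqrt_nonneg _))
    have hnum0 : (0:ℝ) ≤ (if A (t + 1) = a then g a (t + 1) else 0) := by
      split
      · exact (hg _ _).1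
      · exact le_rfl
    have heq : π1 a * inc a = π1 a * (if A (t + 1) = a then g a (t + 1) else 0) / D a :=
      (mul_div_assoc _ _ _).symm
    rw [heq, div_le_one (hDpos a)]
    nlinarith [hπ1pos a]
  have k1 : π1 a * (1 - c * inc a) ≤ π1 a * Real.exp (-(c * inc a)) :=
    mul_le_mul_of_nonneg_left h3 (hπ1pos a).le
  have k2 : c * (π1 a * inc a) ≤ c * 1 := mul_le_mul_of_nonneg_left hπinc hc0
  rw [e1, e2]
  nlinarith [k1, k2, h1, h2]


lemma exp3ixPi_one (hK : 0 < K) (t : ℕ) (ht : t ≤ 1) (a : Fin K) :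
    exp3ixPi n K g A η γ t a = 1 / K := by
  haveI : Nonempty (Fin K) := Fin.pos_iff_nonempty.mp hK
  have h0 : t - 1 = 0 := by omega
  have hG : exp3ixG n K g A η γ (t - 1) = fun _ => 0 := by rw [h0]; rfl
  simp [exp3ixPi, hG, softmax, Finset.card_univ]

lemma exp3ix_lb (n : ℕ) (hK : 0 < K) (hg : ∀ a t, g a t ∈ Set.Icc (0:ℝ) 1)
    (hη : 0 ≤ η) (hγ : 0 ≤ γ) :
    ∀ u a, 1 / K - u * (η / Real.sqrt n) ≤ exp3ixPi n K g A η γ (u + 1) a := by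
  intro u
  induction u with
  | zero => intro a; simp [exp3ixPi_one hK 1 le_rfl a]
  | succ v ih =>
    intro a
    have h1 := exp3ix_step (n := n) (A := A) (γ := γ) hK hg hη hγ v a
    have h2 := ih a
    have hc0 : 0 ≤ η / Real.sqrt n := div_nonneg hη (Real.sqrt_nonneg _)
    push_cast
    linarith

end helpers

/-- lower bound for `Exp3-IX` probabilities. For `ε ∈ (0, 1/K)`,
`η, γ ∈ [0, R]` and `T_ε = min(⌊(1/K − ε)√n/R⌋, n)`, one has `π_t(a) ≥ ε` for all
`1 ≤ t ≤ T_ε` and all actions `a`. -/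
theorem exp3ix_lower_bound (n K : ℕ) (hn : 1 ≤ n) (hK : 2 ≤ K)
    (g : Fin K → ℕ → ℝ) (hg : ∀ a t, g a t ∈ Set.Icc (0 : ℝ) 1)
    (A : ℕ → Fin K) (ε R η γ : ℝ) (hε : 0 < ε) (hεK : ε < 1 / K) (hR : 0 < R)
    (hη : η ∈ Set.Icc 0 R) (hγ : γ ∈ Set.Icc 0 R)
    (Tε : ℕ) (hTε : Tε = min ⌊(1 / K - ε) * Real.sqrt n / R⌋₊ n) :
    ∀ t, 1 ≤ t → t ≤ Tε → ∀ a, ε ≤ exp3ixPi n K g A η γ t a := by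
  intro t ht htT a
  have hK0 : 0 < K := by omega
  obtain ⟨u, rfl⟩ : ∃ u, t = u + 1 := ⟨t - 1, by omega⟩
  have key := exp3ix_lb (g := g) (A := A) (γ := γ) n hK0 hg hη.1 hγ.1 u a
  have hsqrt : 0 < Real.sqrt n := Real.sqrt_pos.mpr (by exact_mod_cast Nat.pos_of_ne_zero (by omega))
  -- bound u * (η/√n) ≤ 1/K - ε
  have hx : (0:ℝ) ≤ (1 / K - ε) * Real.sqrt n / R := by
    have : (0:ℝ) ≤ 1 / K - ε := by linarith
    positivity
  have hu : (u : ℝ) ≤ (1 / K - ε) * Real.sqrt n / R := by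
    have h1 : u ≤ ⌊(1 / K - ε) * Real.sqrt n / R⌋₊ := by
      have h2 := min_le_left ⌊(1 / K - ε) * Real.sqrt n / R⌋₊ n
      omega
    calc (u:ℝ) ≤ (⌊(1 / K - ε) * Real.sqrt n / R⌋₊ : ℝ) := by exact_mod_cast h1
      _ ≤ _ := Nat.floor_le hx
  have hb : u * (η / Real.sqrt n) ≤ 1 / K - ε := by
    have hR' : (u:ℝ) * R ≤ (1 / K - ε) * Real.sqrt n := by
      rw [le_div_iff₀ hR] at hu
      linarith
    have hηR : (u:ℝ) * η ≤ (u:ℝ) * R := by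
      have : (0:ℝ) ≤ (u:ℝ) := Nat.cast_nonneg u
      nlinarith [hη.2]
    rw [mul_div_assoc', div_le_iff₀ hsqrt]
    nlinarith
  linarith
end

section
/- Peeling lemma: Let X and V be real-valued random variables on a probability space and let α, b, v, w be positive numbers such that V ∈ [w, v] almost surely and such that for all x ≥ 0 and all u ∈ [w, v], P( X ≥ √(u x) + b x and (1+α)^{−1} u ≤ V ≤ u ) ≤ e^{−x}. Then for every x ≥ 0, P( X ≥ √((1+α) V x) + b x ) ≤ ( 1 + log(v/w)/log(1+α) ) · e^{−x}. -/
open MeasureTheory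

/-- peeling lemma. If `V ∈ [w, v]` a.s. and for all `x ≥ 0` and
`u ∈ [w, v]`, `P(X ≥ √(ux) + bx and (1+α)⁻¹ u ≤ V ≤ u) ≤ e^{−x}`, then for every
`x ≥ 0`, `P(X ≥ √((1+α) V x) + bx) ≤ (1 + log(v/w)/log(1+α)) e^{−x}`. -/
theorem peeling_lemma {Ω : Type*} [MeasurableSpace Ω] (P : Measure Ω)
    [IsProbabilityMeasure P]
    (X V : Ω → ℝ) (α b v w : ℝ) (hα : 0 < α) (hb : 0 < b) (hv : 0 < v) (hw : 0 < w)
    (hwv : w ≤ v)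
    (hVbound : ∀ᵐ ω ∂P, V ω ∈ Set.Icc w v)
    (h : ∀ x : ℝ, 0 ≤ x → ∀ u ∈ Set.Icc w v,
      P {ω | Real.sqrt (u * x) + b * x ≤ X ω ∧ (1 + α)⁻¹ * u ≤ V ω ∧ V ω ≤ u} ≤
        ENNReal.ofReal (Real.exp (-x))) :
    ∀ x : ℝ, 0 ≤ x →
      P {ω | Real.sqrt ((1 + α) * V ω * x) + b * x ≤ X ω} ≤
        ENNReal.ofReal ((1 + Real.log (v / w) / Real.log (1 + α)) * Real.exp (-x)) := by
  intro x hx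
  have hα1 : (1:ℝ) < 1 + α := by linarith
  have hα0 : (0:ℝ) < 1 + α := by linarith
  have hlog : 0 < Real.log (1 + α) := Real.log_pos hα1
  set L : ℝ := Real.log (v / w) / Real.log (1 + α) with hLdef
  have hvw1 : (1:ℝ) ≤ v / w := (one_le_div hw).mpr hwv
  have hL0 : 0 ≤ L := div_nonneg (Real.log_nonneg hvw1) hlog.le
  set N : ℕ := max 1 ⌈L⌉₊ with hNdef
  have hN1 : 1 ≤ N := le_max_left _ _
  have hNL : (N : ℝ) ≤ 1 + L := by
    rcases le_or_gt (⌈L⌉₊ : ℕ) 1 with h1 | h1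
    · have : N = 1 := by omega
      rw [this]; push_cast; linarith
    · have : N = ⌈L⌉₊ := by omega
      rw [this]
      have := Nat.ceil_lt_add_one hL0
      linarith
  -- v ≤ (1+α)^N * w
  have hLN : L ≤ (N : ℝ) := le_trans (Nat.le_ceil L) (by exact_mod_cast le_max_right 1 ⌈L⌉₊)
  have hNv : v ≤ (1 + α) ^ N * w := by
    have h1 : Real.log (v / w) ≤ (N : ℝ) * Real.log (1 + α) := by
      rw [hLdef, div_le_iff₀ hlog] at hLN
      exact hLN
    have h2 : v / w ≤ (1 + α) ^ N := by
      have hpow : (0:ℝ) < (1 + α) ^ N := pow_pos hα0 N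
      have := Real.exp_le_exp.mpr h1
      rwa [Real.exp_log (by positivity), ← Real.log_pow, Real.exp_log hpow] at this
    calc v = v / w * w := by field_simp
    _ ≤ (1 + α) ^ N * w := by exact mul_le_mul_of_nonneg_right h2 hw.le
  -- peeling sets
  set u : ℕ → ℝ := fun k => min ((1 + α) ^ (k + 1) * w) v with hudef
  have hu_mem : ∀ k, u k ∈ Set.Icc w v := by
    intro k
    constructor
    · apply le_min _ hwv
      calc w = 1 * w := (one_mul w).symm
      _ ≤ (1 + α) ^ (k + 1) * w := by
          apply mul_le_mul_of_nonneg_right _ hw.le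
          exact one_le_pow₀ hα1.le
    · exact min_le_right _ _
  set S : ℕ → Set Ω := fun k =>
    {ω | Real.sqrt (u k * x) + b * x ≤ X ω ∧ (1 + α)⁻¹ * u k ≤ V ω ∧ V ω ≤ u k} with hSdef
  -- a.e. inclusion of the event into the union of the S k, k < N
  have hsub : {ω | Real.sqrt ((1 + α) * V ω * x) + b * x ≤ X ω} ≤ᵐ[P]
      ⋃ k ∈ Finset.range N, S k := by
    filter_upwards [hVbound] with ω hVω hEω
    obtain ⟨hVw, hVv⟩ := hVω
    -- find k < N with (1+α)^k w ≤ V ω ≤ (1+α)^(k+1) w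
    have hex : ∃ k, V ω ≤ (1 + α) ^ (k + 1) * w := by
      refine ⟨N - 1, ?_⟩
      have : N - 1 + 1 = N := by omega
      rw [this]
      exact le_trans hVv hNv
    set k := Nat.find hex with hkdef
    have hk_le : V ω ≤ (1 + α) ^ (k + 1) * w := Nat.find_spec hex
    have hk_ge : (1 + α) ^ k * w ≤ V ω := by
      rcases Nat.eq_zero_or_pos k with hk0 | hk0
      · rw [hk0]; simpa using hVw
      · have := Nat.find_min hex (m := k - 1) (by omega)
        push_neg at this
        have h' : k - 1 + 1 = k := by omega
        rw [h'] at this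
        exact this.le
    have hkN : k < N := by
      have : k ≤ N - 1 := Nat.find_min' hex (by
        have : N - 1 + 1 = N := by omega
        rw [this]; exact le_trans hVv hNv)
      omega
    refine Set.mem_iUnion₂.mpr ⟨k, Finset.mem_range.mpr hkN, ?_⟩
    have huk_ge : (1 + α)⁻¹ * u k ≤ (1 + α) ^ k * w := by
      calc (1 + α)⁻¹ * u k ≤ (1 + α)⁻¹ * ((1 + α) ^ (k + 1) * w) :=
            mul_le_mul_of_nonneg_left (min_le_left _ _) (by positivity)
      _ = (1 + α) ^ k * w := by rw [pow_succ]; field_simp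
    have hV_le_uk : V ω ≤ u k := le_min hk_le hVv
    have huk_le : u k ≤ (1 + α) * V ω := by
      calc u k ≤ (1 + α) ^ (k + 1) * w := min_le_left _ _
      _ = (1 + α) * ((1 + α) ^ k * w) := by rw [pow_succ]; ring
      _ ≤ (1 + α) * V ω := mul_le_mul_of_nonneg_left hk_ge hα0.le
    refine ⟨?_, huk_ge.trans hk_ge, hV_le_uk⟩
    refine le_trans ?_ hEω
    have : Real.sqrt (u k * x) ≤ Real.sqrt ((1 + α) * V ω * x) :=
      Real.sqrt_le_sqrt (mul_le_mul_of_nonneg_right huk_le hx)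
    linarith
  calc P {ω | Real.sqrt ((1 + α) * V ω * x) + b * x ≤ X ω}
      ≤ P (⋃ k ∈ Finset.range N, S k) := measure_mono_ae hsub
  _ ≤ ∑ k ∈ Finset.range N, P (S k) := measure_biUnion_finset_le _ _
  _ ≤ ∑ k ∈ Finset.range N, ENNReal.ofReal (Real.exp (-x)) := by
      apply Finset.sum_le_sum
      intro k _
      exact h x hx (u k) (hu_mem k)
  _ = (N : ENNReal) * ENNReal.ofReal (Real.exp (-x)) := by
      rw [Finset.sum_const, Finset.card_range, nsmul_eq_mul]
  _ ≤ ENNReal.ofReal ((1 + L) * Real.exp (-x)) := by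
      rw [ENNReal.ofReal_mul (by linarith)]
      apply mul_le_mul_left
      rw [← ENNReal.ofReal_natCast N]
      exact ENNReal.ofReal_le_ofReal hNL
end

section
/- For every integer ℓ ≥ 2 and every real x > 0, |log(x)|^ℓ / ℓ! ≤ (9/64) · (x − 1/x)². -/
lemma key_aux (ℓ : ℕ) (hℓ : 2 ≤ ℓ) (t : ℝ) (ht : 0 ≤ t) :
    t ^ ℓ / (Nat.factorial ℓ : ℝ) ≤ (9 / 64) * (Real.exp t - Real.exp (-t)) ^ 2 := by
  rcases eq_or_lt_of_le hℓ with h2 | h3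
  · -- ℓ = 2 : use t ≤ sinh t
    subst h2
    have hs : t ≤ Real.sinh t := by
      rcases eq_or_lt_of_le ht with h0 | h0
      · simp [← h0]
      · exact (Real.self_lt_sinh_iff.2 h0).le
    rw [Real.sinh_eq] at hs
    have : 2 * t ≤ Real.exp t - Real.exp (-t) := by linarith
    have h2 : (2 * t) ^ 2 ≤ (Real.exp t - Real.exp (-t)) ^ 2 := by
      apply pow_le_pow_left₀ (by linarith) this
    norm_num [Nat.factorial]
    nlinarith
  · -- ℓ ≥ 3
    have h3 : 3 ≤ ℓ := h3
    have hkey : (2 * t) ^ ℓ / (Nat.factorial ℓ : ℝ) ≤ (Real.exp t - Real.exp (-t)) ^ 2 := by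
      have hsum : ∑ i ∈ Finset.range (ℓ + 1), (2 * t) ^ i / (Nat.factorial i : ℝ)
          ≤ Real.exp (2 * t) := Real.sum_le_exp_of_nonneg (by linarith) _
      have hsub : (1 : ℝ) + 2 * t + (2 * t) ^ ℓ / (Nat.factorial ℓ : ℝ)
          ≤ ∑ i ∈ Finset.range (ℓ + 1), (2 * t) ^ i / (Nat.factorial i : ℝ) := by
        have hss : ({0, 1, ℓ} : Finset ℕ) ⊆ Finset.range (ℓ + 1) := by
          intro i hi
          simp only [Finset.mem_insert, Finset.mem_singleton] at hi
          rcases hi with rfl | rfl | rfl <;> simp [Finset.mem_range] <;> omega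
        have := Finset.sum_le_sum_of_subset_of_nonneg hss
          (fun i _ _ => by positivity :
            ∀ i ∈ Finset.range (ℓ + 1), i ∉ ({0, 1, ℓ} : Finset ℕ) →
              (0:ℝ) ≤ (2 * t) ^ i / (Nat.factorial i : ℝ))
        refine le_trans (le_of_eq ?_) this
        rw [Finset.sum_insert (by simp; omega), Finset.sum_insert (by simp; omega),
          Finset.sum_singleton]
        simp [Nat.factorial]
        ring
      have hexp2 : (1 : ℝ) - 2 * t ≤ Real.exp (-(2 * t)) := by
        have := Real.add_one_le_exp (-(2 * t)); linarith
      have hsq : (Real.exp t - Real.exp (-t)) ^ 2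
          = Real.exp (2 * t) + Real.exp (-(2 * t)) - 2 := by
        have e3 : Real.exp t * Real.exp (-t) = 1 := by
          rw [← Real.exp_add]; simp
        rw [show (2:ℝ) * t = t + t by ring, Real.exp_add,
          show -(t + t) = -t + -t by ring, Real.exp_add]
        nlinarith [e3]
      rw [hsq]
      linarith
    have hpow : (2 : ℝ) ^ ℓ * (t ^ ℓ / (Nat.factorial ℓ : ℝ)) =
        (2 * t) ^ ℓ / (Nat.factorial ℓ : ℝ) := by
      rw [mul_pow]; ring
    have h8 : (8 : ℝ) ≤ 2 ^ ℓ := by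
      calc (8:ℝ) = 2 ^ 3 := by norm_num
      _ ≤ 2 ^ ℓ := by apply pow_le_pow_right₀ (by norm_num) h3
    have hnn : (0:ℝ) ≤ t ^ ℓ / (Nat.factorial ℓ : ℝ) := by positivity
    nlinarith [hkey, hpow, h8, hnn]

/-- For every integer ℓ ≥ 2 and every real x > 0,
`|log x|^ℓ / ℓ! ≤ (9/64) (x − 1/x)²`. -/
theorem abs_log_pow_div_factorial_le (ℓ : ℕ) (hℓ : 2 ≤ ℓ) (x : ℝ) (hx : 0 < x) :
    |Real.log x| ^ ℓ / (Nat.factorial ℓ : ℝ) ≤ (9 / 64) * (x - 1 / x) ^ 2 := by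
  have hxe : x = Real.exp (Real.log x) := (Real.exp_log hx).symm
  have hinv : 1 / x = Real.exp (-(Real.log x)) := by
    rw [Real.exp_neg, Real.exp_log hx, one_div]
  set s := Real.log x with hs
  have key := key_aux ℓ hℓ |s| (abs_nonneg s)
  have hsq : (x - 1 / x) ^ 2 = (Real.exp |s| - Real.exp (-|s|)) ^ 2 := by
    rw [hinv, hxe]
    rcases abs_cases s with ⟨h1, _⟩ | ⟨h1, _⟩
    · rw [h1]
    · rw [h1]; ring
  rw [hsq]
  exact key
end

section
/- Let P and Q be probability measures on a common measurable space. Then KL(P, (P+Q)/2) ≥ (2 log 2 − 1) · H²(P, Q), where (P+Q)/2 is the mixture measure. Moreover, whenever P is absolutely continuous with respect to Q, 2 H²(P, Q) ≤ KL(P, Q). -/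
open MeasureTheory ENNReal

-- Kullback–Leibler divergence `KL(P,Q) = ∫ log(dP/dQ) dP`, set to `+∞` when `P`
-- is not absolutely continuous w.r.t. `Q` or when the integrand is not integrable.
open Classical in
noncomputable def klDiv' {Ω : Type*} [MeasurableSpace Ω] (P Q : Measure Ω) : ℝ≥0∞ :=
  if P ≪ Q ∧ Integrable (fun ω => Real.log ((P.rnDeriv Q ω).toReal)) P then
    ENNReal.ofReal (∫ ω, Real.log ((P.rnDeriv Q ω).toReal) ∂P)
  else ∞

/-- Squared Hellinger distance `H²(P,Q) = (1/2) ∫ (√(dP/dμ) − √(dQ/dμ))² dμ`,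
computed with the dominating measure `μ = P + Q`. -/
noncomputable def sqHellinger {Ω : Type*} [MeasurableSpace Ω] (P Q : Measure Ω) : ℝ :=
  (1 / 2) * ∫ ω, (Real.sqrt ((P.rnDeriv (P + Q) ω).toReal) -
    Real.sqrt ((Q.rnDeriv (P + Q) ω).toReal)) ^ 2 ∂(P + Q)

/-!
With densities `p, q, r` of `P, Q, R` with respect to a common dominating measure `μ`,
`KL(P, R) = ∫ r · klFun (p / r) dμ`, where `klFun x = x log x + 1 - x`, and
`2 H²(P, Q) = ∫ (√p - √q)² dμ`, so both bounds follow from pointwise inequalities.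

For `R = Q` this is `(√x - 1)² ≤ klFun x`, as `klFun (y²) - (y - 1)² = 2 y klFun y ≥ 0`.
For `R = (P + Q) / 2` and `μ = P + Q` we have `r = 1/2` and `p + q = 1`, so
`(√p - √q)² ≤ (p - q)² = (2p - 1)²`, and it remains to show `(2 log 2 - 1) (y - 1)² ≤ klFun y`
on `[0, 2]`. The constant is `klFun 2`, so the two sides meet at `y = 2` as well as at `y = 1`.
-/

open InformationTheory Real Set

lemma sq_sqrt_sub_one_le_klFun {x : ℝ} (hx : 0 ≤ x) : (√x - 1) ^ 2 ≤ klFun x := by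
  obtain ⟨y, hy, rfl⟩ : ∃ y, 0 ≤ y ∧ y ^ 2 = x := ⟨√x, sqrt_nonneg x, sq_sqrt hx⟩
  have key : klFun (y ^ 2) - (y - 1) ^ 2 = 2 * y * klFun y := by
    rw [klFun_apply, klFun_apply, Real.log_pow]; push_cast; ring
  rw [sqrt_sq hy]
  nlinarith [mul_nonneg hy (klFun_nonneg hy)]

lemma sq_sqrt_sub_sqrt_le_mul_klFun_div {p q : ℝ} (hp : 0 ≤ p) (hq : 0 < q) :
    (√p - √q) ^ 2 ≤ q * klFun (p / q) := by
  calc (√p - √q) ^ 2 = q * (√(p / q) - 1) ^ 2 := by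
        rw [sqrt_div' _ hq.le]
        field_simp
        rw [sq_sqrt hq.le]
        ring
    _ ≤ q * klFun (p / q) :=
        mul_le_mul_of_nonneg_left (sq_sqrt_sub_one_le_klFun (div_nonneg hp hq.le)) hq.le

lemma sq_sqrt_sub_sqrt_le_sq_sub {p q : ℝ} (hp : 0 ≤ p) (hq : 0 ≤ q) (hpq : p + q = 1) :
    (√p - √q) ^ 2 ≤ (p - q) ^ 2 := by
  have hpq' : p - q = (√p - √q) * (√p + √q) := by
    linear_combination -(sq_sqrt hp) + sq_sqrt hq
  have hsum : 1 ≤ (√p + √q) ^ 2 := by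
    nlinarith [sq_sqrt hp, sq_sqrt hq, mul_nonneg (sqrt_nonneg p) (sqrt_nonneg q)]
  rw [hpq', mul_pow]
  nlinarith [sq_nonneg (√p - √q)]

lemma two_mul_log_two_sub_one_mul_sq_le_klFun {y : ℝ} (hy₀ : 0 ≤ y) (hy₂ : y ≤ 2) :
    (2 * Real.log 2 - 1) * (y - 1) ^ 2 ≤ klFun y := by
  set c := 2 * Real.log 2 - 1 with hc
  have hc₃ : 1 / 3 < c := by linarith [log_two_gt_d9]
  have hc₂ : c < 1 / 2 := by linarith [log_two_lt_d9]
  rcases hy₀.eq_or_lt with rfl | hy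
  · rw [klFun_zero]; linarith
  -- `g = (klFun - c (· - 1)²) / id` decreases on `(0, 1]`, increases on `[1, m]` and decreases on
  -- `[m, 2]`, and vanishes at `1` and `2`.
  set g : ℝ → ℝ := fun x ↦ Real.log x + (1 - c) * x⁻¹ - c * x + (2 * c - 1) with hg
  set m := (1 - c) / c with hm
  have hg_deriv (x : ℝ) (hx : 0 < x) : HasDerivAt g ((x - 1) * (1 - c - c * x) / x ^ 2) x :=
    ((((hasDerivAt_log hx.ne').add ((hasDerivAt_inv hx.ne').const_mul (1 - c))).sub
      ((hasDerivAt_id x).const_mul c)).add_const (2 * c - 1)).congr_deriv (by field_simp; ring)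
  have hg_cont (a b : ℝ) (ha : 0 < a) : ContinuousOn g (Icc a b) := fun x hx ↦
    (hg_deriv x (ha.trans_le hx.1)).continuousAt.continuousWithinAt
  have hg_within (a b : ℝ) (ha : 0 < a) : ∀ x ∈ interior (Icc a b),
      HasDerivWithinAt g ((x - 1) * (1 - c - c * x) / x ^ 2) (interior (Icc a b)) x := by
    intro x hx
    rw [interior_Icc] at hx
    exact (hg_deriv x (ha.trans hx.1)).hasDerivWithinAt
  have hg₁ : g 1 = 0 := by simp only [hg, Real.log_one, inv_one]; ring
  have hg₂ : g 2 = 0 := by simp only [hg, hc]; ring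
  have hm₁ : 1 < m := by rw [hm, lt_div_iff₀ (by linarith)]; linarith
  have hm₂ : m ≤ 2 := by rw [hm, div_le_iff₀ (by linarith)]; linarith
  have hgy : 0 ≤ g y := by
    rcases le_total y 1 with hy1 | hy1
    · refine hg₁ ▸ antitoneOn_of_hasDerivWithinAt_nonpos (convex_Icc y 1) (hg_cont y 1 hy)
        (hg_within y 1 hy) ?_ ⟨le_rfl, hy1⟩ ⟨hy1, le_rfl⟩ hy1
      intro x hx
      rw [interior_Icc] at hx
      exact div_nonpos_of_nonpos_of_nonneg
        (mul_nonpos_of_nonpos_of_nonneg (by linarith [hx.2]) (by nlinarith [hx.2])) (sq_nonneg x)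
    rcases le_total y m with hym | hym
    · refine hg₁ ▸ monotoneOn_of_hasDerivWithinAt_nonneg (convex_Icc 1 m)
        (hg_cont _ _ one_pos) (hg_within _ _ one_pos) ?_ ⟨le_rfl, hm₁.le⟩ ⟨hy1, hym⟩ hy1
      intro x hx
      rw [interior_Icc] at hx
      have : c * x < 1 - c := by rw [← lt_div_iff₀' (by linarith)]; exact hx.2
      exact div_nonneg (mul_nonneg (by linarith [hx.1]) (by linarith)) (sq_nonneg x)
    · refine hg₂ ▸ antitoneOn_of_hasDerivWithinAt_nonpos (convex_Icc m 2)
        (hg_cont _ _ (by linarith)) (hg_within _ _ (by linarith)) ?_ ⟨hym, hy₂⟩ ⟨hm₂, le_rfl⟩ hy₂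
      intro x hx
      rw [interior_Icc] at hx
      have : 1 - c < c * x := by rw [← div_lt_iff₀' (by linarith)]; exact hx.1
      exact div_nonpos_of_nonpos_of_nonneg
        (mul_nonpos_of_nonneg_of_nonpos (by linarith [hx.1]) (by linarith)) (sq_nonneg x)
  have key : klFun y - c * (y - 1) ^ 2 = y * g y := by
    simp only [hg, klFun_apply]
    field_simp
    ring
  nlinarith [mul_nonneg hy.le hgy]

lemma two_mul_log_two_sub_one_mul_sq_sqrt_sub_sqrt_le_klFun {p q : ℝ} (hp : 0 ≤ p) (hq : 0 ≤ q)
    (hpq : p + q = 1) : (2 * Real.log 2 - 1) * (√p - √q) ^ 2 ≤ klFun (2 * p) := by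
  have hc : 0 ≤ 2 * Real.log 2 - 1 := by linarith [Real.log_two_gt_d9]
  calc (2 * Real.log 2 - 1) * (√p - √q) ^ 2 ≤ (2 * Real.log 2 - 1) * (p - q) ^ 2 :=
        mul_le_mul_of_nonneg_left (sq_sqrt_sub_sqrt_le_sq_sub hp hq hpq) hc
    _ = (2 * Real.log 2 - 1) * (2 * p - 1) ^ 2 := by rw [show q = 1 - p by linarith]; ring
    _ ≤ klFun (2 * p) := two_mul_log_two_sub_one_mul_sq_le_klFun (by linarith) (by linarith)

section

variable {α : Type*} {mα : MeasurableSpace α} {μ : Measure α}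

lemma ofReal_integral_le_lintegral_ofReal (f : α → ℝ) :
    ENNReal.ofReal (∫ x, f x ∂μ) ≤ ∫⁻ x, ENNReal.ofReal (f x) ∂μ := by
  by_cases hf : Integrable f μ
  · rw [integral_eq_lintegral_pos_part_sub_lintegral_neg_part hf]
    exact (ofReal_le_ofReal (sub_le_self _ toReal_nonneg)).trans ofReal_toReal_le
  · simp [integral_undef hf]

lemma toReal_rnDeriv_add_toReal_rnDeriv_eq_one (P Q : Measure α) [IsFiniteMeasure P]
    [IsFiniteMeasure Q] :
    ∀ᵐ x ∂(P + Q), (P.rnDeriv (P + Q) x).toReal + (Q.rnDeriv (P + Q) x).toReal = 1 := by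
  filter_upwards [Measure.rnDeriv_add P Q (P + Q), (P + Q).rnDeriv_self,
    P.rnDeriv_lt_top (P + Q), Q.rnDeriv_lt_top (P + Q)] with x hadd hself hP hQ
  rw [← toReal_add hP.ne hQ.ne, ← Pi.add_apply, ← hadd, hself, toReal_one]

variable {P R : Measure α}

lemma klDiv'_eq_klDiv [IsProbabilityMeasure P] [IsProbabilityMeasure R] :
    klDiv' P R = klDiv P R := by
  unfold klDiv'
  split_ifs with h
  · rw [klDiv_of_ac_of_integrable h.1 h.2]
    simp [llr]
  · exact (klDiv_eq_top_iff.mpr fun hPR hint ↦ h ⟨hPR, hint⟩).symm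

variable [IsFiniteMeasure P] [IsFiniteMeasure R] [SigmaFinite μ]

lemma klDiv_eq_lintegral_rnDeriv_mul_klFun_div (hPμ : P ≪ μ) (hRμ : R ≪ μ) (hPR : P ≪ R) :
    klDiv P R = ∫⁻ x, R.rnDeriv μ x *
      ENNReal.ofReal (klFun ((P.rnDeriv μ x).toReal / (R.rnDeriv μ x).toReal)) ∂μ := by
  rw [klDiv_eq_lintegral_klFun_of_ac hPR, lintegral_rnDeriv_mul hRμ (by fun_prop)]
  refine lintegral_congr_ae ?_
  filter_upwards [Measure.rnDeriv_eq_div hPμ hRμ] with x hx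
  rw [hx, toReal_div]

lemma ofReal_integral_le_klDiv (hPμ : P ≪ μ) (hRμ : R ≪ μ) {f : α → ℝ}
    (hf : ∀ᵐ x ∂μ, f x ≤
      (R.rnDeriv μ x).toReal * klFun ((P.rnDeriv μ x).toReal / (R.rnDeriv μ x).toReal)) :
    ENNReal.ofReal (∫ x, f x ∂μ) ≤ klDiv P R := by
  by_cases hPR : P ≪ R
  swap
  · simp [klDiv_of_not_ac hPR]
  rw [klDiv_eq_lintegral_rnDeriv_mul_klFun_div hPμ hRμ hPR]
  refine (ofReal_integral_le_lintegral_ofReal f).trans (lintegral_mono_ae ?_)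
  filter_upwards [hf, R.rnDeriv_lt_top μ] with x hfx hR
  rw [← ofReal_toReal hR.ne, ← ofReal_mul toReal_nonneg, ofReal_toReal hR.ne]
  exact ofReal_le_ofReal hfx

end

lemma ofReal_two_mul_log_two_sub_one_mul_sqHellinger_le_klDiv {α : Type*} {mα : MeasurableSpace α}
    (P Q : Measure α) [IsFiniteMeasure P] [IsFiniteMeasure Q] :
    ENNReal.ofReal ((2 * Real.log 2 - 1) * sqHellinger P Q) ≤
      klDiv P ((2 : ℝ≥0∞)⁻¹ • (P + Q)) := by
  have : IsFiniteMeasure ((2 : ℝ≥0∞)⁻¹ • (P + Q)) :=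
    ⟨ENNReal.mul_lt_top (by simp) (measure_lt_top _ _)⟩
  calc ENNReal.ofReal ((2 * Real.log 2 - 1) * sqHellinger P Q)
      = ENNReal.ofReal (∫ x, 2⁻¹ * ((2 * Real.log 2 - 1) * (√(P.rnDeriv (P + Q) x).toReal -
          √(Q.rnDeriv (P + Q) x).toReal) ^ 2) ∂(P + Q)) := by
        rw [sqHellinger, integral_const_mul, integral_const_mul]; ring_nf
    _ ≤ klDiv P ((2 : ℝ≥0∞)⁻¹ • (P + Q)) := by
        refine ofReal_integral_le_klDiv (Measure.AbsolutelyContinuous.rfl.add_right Q)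
          (Measure.AbsolutelyContinuous.rfl.smul_left _) ?_
        filter_upwards [toReal_rnDeriv_add_toReal_rnDeriv_eq_one P Q,
          Measure.rnDeriv_smul_left_of_ne_top (P + Q) (P + Q) (r := 2⁻¹) (by simp),
          (P + Q).rnDeriv_self] with x hpq hr hself
        rw [hr, Pi.smul_apply, hself]
        simp only [smul_eq_mul, mul_one, toReal_inv, toReal_ofNat, div_inv_eq_mul]
        rw [mul_comm _ (2 : ℝ)]
        exact mul_le_mul_of_nonneg_left (two_mul_log_two_sub_one_mul_sq_sqrt_sub_sqrt_le_klFun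
          toReal_nonneg toReal_nonneg hpq) (by norm_num)

lemma ofReal_two_mul_sqHellinger_le_klDiv {α : Type*} {mα : MeasurableSpace α}
    {P Q : Measure α} [IsFiniteMeasure P] [IsFiniteMeasure Q] (hPQ : P ≪ Q) :
    ENNReal.ofReal (2 * sqHellinger P Q) ≤ klDiv P Q := by
  have hQ_pos : ∀ᵐ x ∂(P + Q), 0 < (Q.rnDeriv (P + Q) x).toReal := by
    filter_upwards [hPQ.add_left Measure.AbsolutelyContinuous.rfl
        (Measure.rnDeriv_pos (Measure.AbsolutelyContinuous.rfl.add_right' P)),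
      Q.rnDeriv_lt_top (P + Q)] with x hpos hlt
    exact toReal_pos hpos.ne' hlt.ne
  calc ENNReal.ofReal (2 * sqHellinger P Q)
      = ENNReal.ofReal (∫ x, (√(P.rnDeriv (P + Q) x).toReal -
          √(Q.rnDeriv (P + Q) x).toReal) ^ 2 ∂(P + Q)) := by
        rw [sqHellinger]; ring_nf
    _ ≤ klDiv P Q := ofReal_integral_le_klDiv (Measure.AbsolutelyContinuous.rfl.add_right Q)
        (Measure.AbsolutelyContinuous.rfl.add_right' P) (by
          filter_upwards [hQ_pos] with x hq
          exact sq_sqrt_sub_sqrt_le_mul_klFun_div toReal_nonneg hq)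

/-- for probability measures `P, Q`,
`KL(P, (P+Q)/2) ≥ (2 log 2 − 1) H²(P,Q)`, and whenever `P ≪ Q`,
`2 H²(P,Q) ≤ KL(P,Q)`. -/
theorem kl_hellinger_bounds {Ω : Type*} [MeasurableSpace Ω] (P Q : Measure Ω)
    [IsProbabilityMeasure P] [IsProbabilityMeasure Q] :
    ENNReal.ofReal ((2 * Real.log 2 - 1) * sqHellinger P Q) ≤
      klDiv' P (((2 : ℝ≥0∞))⁻¹ • (P + Q)) ∧
    (P ≪ Q → ENNReal.ofReal (2 * sqHellinger P Q) ≤ klDiv' P Q) := by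
  have : IsProbabilityMeasure ((2 : ℝ≥0∞)⁻¹ • (P + Q)) := ⟨by simp [inv_two_add_inv_two]⟩
  rw [klDiv'_eq_klDiv, klDiv'_eq_klDiv]
  exact ⟨ofReal_two_mul_log_two_sub_one_mul_sqHellinger_le_klDiv P Q,
    ofReal_two_mul_sqHellinger_le_klDiv⟩
end

section
/- Cumulative lower bound for Exp3-IX: For any parameter θ = (η, γ) ∈ [0,∞)² and any sequences of losses in [0,1] and actions in [K], the Exp3-IX probabilities satisfy π_{t+1}^θ(a) ≥ π_t^θ(a) · exp(−(η/√n)/(γ/√n + π_t^θ(a))) ≥ π_t^θ(a) − η/√n for every a ∈ [K] and every t ≥ 1, and consequently π_{t+1}^θ(a) ≥ 1/K − (η/√n) · t for every a ∈ [K] and every t ≥ 0. -/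
lemma softmax_shift_le {ι : Type*} [Fintype ι] [Nonempty ι] (h δ : ι → ℝ)
    (hδ : ∀ b, 0 ≤ δ b) (a : ι) :
    softmax h a * Real.exp (-(δ a)) ≤ softmax (fun b => h b - δ b) a := by
  unfold softmax
  rw [div_mul_eq_mul_div, ← Real.exp_add]
  apply div_le_div₀ (Real.exp_pos _).le
  · exact Real.exp_le_exp.mpr (by dsimp only; linarith)
  · exact Finset.sum_pos (fun b _ => Real.exp_pos _) Finset.univ_nonempty
  · exact Finset.sum_le_sum fun b _ => Real.exp_le_exp.mpr (by dsimp only; linarith [hδ b])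

/-- cumulative lower bound for `Exp3-IX`. For any parameter
`θ = (η, γ) ∈ [0,∞)²`, losses in `[0,1]` and actions in `[K]`: for `t ≥ 1`,
`π_{t+1}(a) ≥ π_t(a) exp(−(η/√n)/(γ/√n + π_t(a))) ≥ π_t(a) − η/√n`, and
consequently `π_{t+1}(a) ≥ 1/K − (η/√n) t` for every `a`. -/
theorem exp3ix_cumulative_lower_bound (n K : ℕ) (hn : 1 ≤ n) (hK : 2 ≤ K)
    (g : Fin K → ℕ → ℝ) (hg : ∀ a t, g a t ∈ Set.Icc (0 : ℝ) 1)
    (A : ℕ → Fin K) (η γ : ℝ) (hη : 0 ≤ η) (hγ : 0 ≤ γ) :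
    (∀ t : ℕ, 1 ≤ t → ∀ a,
      exp3ixPi n K g A η γ t a *
          Real.exp (-(η / Real.sqrt n) /
            (γ / Real.sqrt n + exp3ixPi n K g A η γ t a)) ≤
        exp3ixPi n K g A η γ (t + 1) a ∧
      exp3ixPi n K g A η γ t a - η / Real.sqrt n ≤
        exp3ixPi n K g A η γ t a *
          Real.exp (-(η / Real.sqrt n) /
            (γ / Real.sqrt n + exp3ixPi n K g A η γ t a))) ∧
    (∀ t : ℕ, ∀ a,
      1 / (K : ℝ) - η / Real.sqrt n * (t : ℝ) ≤ exp3ixPi n K g A η γ (t + 1) a) := by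
  have hK0 : 0 < K := by omega
  haveI : Nonempty (Fin K) := ⟨⟨0, hK0⟩⟩
  have hn0 : (0 : ℝ) < n := by exact_mod_cast hn
  have hsn : 0 < Real.sqrt n := Real.sqrt_pos.mpr hn0
  set c := η / Real.sqrt n with hc_def
  have hc : 0 ≤ c := div_nonneg hη hsn.le
  have hγ' : 0 ≤ γ / Real.sqrt n := div_nonneg hγ hsn.le
  have hπpos : ∀ t a, 0 < exp3ixPi n K g A η γ t a := fun t a => softmax_pos _ a
  -- the purely algebraic second inequality
  have alg : ∀ p : ℝ, 0 < p →
      p - c ≤ p * Real.exp (-c / (γ / Real.sqrt n + p)) := by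
    intro p hp
    have hd : 0 < γ / Real.sqrt n + p := by linarith
    have h1 : 1 - c / (γ / Real.sqrt n + p) ≤
        Real.exp (-c / (γ / Real.sqrt n + p)) := by
      have h2 := Real.add_one_le_exp (-c / (γ / Real.sqrt n + p))
      have h3 : -c / (γ / Real.sqrt n + p) = -(c / (γ / Real.sqrt n + p)) :=
        neg_div _ _
      linarith
    have h4 : p * (c / (γ / Real.sqrt n + p)) ≤ c := by
      rw [mul_div_assoc']
      rw [div_le_iff₀ hd]
      nlinarith
    calc p - c ≤ p * (1 - c / (γ / Real.sqrt n + p)) := by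
          rw [mul_sub, mul_one]; linarith
      _ ≤ p * Real.exp (-c / (γ / Real.sqrt n + p)) :=
          mul_le_mul_of_nonneg_left h1 hp.le
  -- the key first inequality
  have key : ∀ s : ℕ, ∀ a : Fin K,
      exp3ixPi n K g A η γ (s + 1) a *
        Real.exp (-c / (γ / Real.sqrt n + exp3ixPi n K g A η γ (s + 1) a)) ≤
      exp3ixPi n K g A η γ (s + 2) a := by
    intro s a
    have hπa := hπpos (s + 1) a
    set π := exp3ixPi n K g A η γ (s + 1) with hπ
    set δ₀ : Fin K → ℝ := fun b =>
      (if A (s + 1) = b then g b (s + 1) else 0) / (γ / Real.sqrt n + π b)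
      with hδ₀
    have hπb : ∀ b, 0 < π b := hπpos (s + 1)
    have hnum : ∀ b, 0 ≤ (if A (s + 1) = b then g b (s + 1) else 0) := by
      intro b
      split
      · exact (hg b (s + 1)).1
      · exact le_rfl
    have hnum1 : ∀ b, (if A (s + 1) = b then g b (s + 1) else 0) ≤ 1 := by
      intro b
      split
      · exact (hg b (s + 1)).2
      · exact zero_le_one
    have hδ₀nn : ∀ b, 0 ≤ δ₀ b := fun b =>
      div_nonneg (hnum b) (by linarith [hπb b])
    have hδ₀le : δ₀ a ≤ 1 / (γ / Real.sqrt n + π a) := by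
      apply div_le_div_of_nonneg_right ?_ (by linarith)
      · exact hnum1 a
    have heq1 : π = softmax (fun b => -(η / Real.sqrt n) * exp3ixG n K g A η γ s b) := by
      rw [hπ]; rfl
    have heq2 : exp3ixPi n K g A η γ (s + 2) =
        softmax (fun b =>
          (-(η / Real.sqrt n) * exp3ixG n K g A η γ s b) - c * δ₀ b) := by
      funext x
      show softmax (fun b => -(η / Real.sqrt n) * exp3ixG n K g A η γ (s + 1) b) x = _
      congr 1
      funext b
      show -(η / Real.sqrt n) * (exp3ixG n K g A η γ s b +
        (if A (s + 1) = b then g b (s + 1) else 0) /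
          (γ / Real.sqrt n +
            softmax (fun c => -(η / Real.sqrt n) * exp3ixG n K g A η γ s c) b)) = _
      rw [hδ₀]
      rw [← heq1]
      ring
    have hstep := softmax_shift_le
      (fun b => -(η / Real.sqrt n) * exp3ixG n K g A η γ s b)
      (fun b => c * δ₀ b) (fun b => mul_nonneg hc (hδ₀nn b)) a
    rw [← heq1] at hstep
    rw [heq2]
    refine le_trans ?_ hstep
    apply mul_le_mul_of_nonneg_left ?_ (hπb a).le
    apply Real.exp_le_exp.mpr
    have h5 : c * δ₀ a ≤ c * (1 / (γ / Real.sqrt n + π a)) :=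
      mul_le_mul_of_nonneg_left hδ₀le hc
    have h6 : c * (1 / (γ / Real.sqrt n + π a)) = c / (γ / Real.sqrt n + π a) := by
      ring
    have h7 : -c / (γ / Real.sqrt n + π a) = -(c / (γ / Real.sqrt n + π a)) :=
      neg_div _ _
    linarith
  have huniform : ∀ a : Fin K, exp3ixPi n K g A η γ 1 a = 1 / K := by
    intro a
    simp [exp3ixPi, exp3ixG, softmax]
  have third : ∀ t : ℕ, ∀ a : Fin K,
      1 / (K : ℝ) - c * t ≤ exp3ixPi n K g A η γ (t + 1) a := by
    intro t
    induction t with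
    | zero =>
      intro a
      rw [huniform a]
      simp
    | succ t ih =>
      intro a
      have h1 := key t a
      have h2 := alg (exp3ixPi n K g A η γ (t + 1) a) (hπpos (t + 1) a)
      have h3 := ih a
      push_cast
      linarith
  refine ⟨fun t ht a => ?_, third⟩
  obtain ⟨s, rfl⟩ : ∃ s, t = s + 1 := ⟨t - 1, by omega⟩
  have hneg : -(η / Real.sqrt n) = -c := rfl
  rw [hneg]
  exact ⟨key s a, alg _ (hπpos (s + 1) a)⟩
end

section
/- Pointwise log-power ratio bound: For every integer ℓ ≥ 2 and all real numbers x, y ≥ 0 and z > 0, | log( (z + x)/(z + y) ) |^ℓ ≤ (9/64) · 2^ℓ · ℓ! · (x − y)² / ( (z + x)(z + y) ). -/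
open Real

private lemma aux_pow_le_factorial : ∀ ℓ : ℕ, 2 ≤ ℓ → ((11:ℝ)/5) ^ (ℓ - 2) ≤ (9/16) * (Nat.factorial ℓ : ℝ) := by
  intro ℓ hℓ
  induction ℓ, hℓ using Nat.le_induction with
  | base => norm_num
  | succ n hn ih =>
    have h1 : (n + 1) - 2 = (n - 2) + 1 := by omega
    rw [h1, pow_succ, Nat.factorial_succ]
    have h3 : ((11:ℝ)/5) ≤ ((n:ℝ) + 1) := by
      have : (3:ℝ) ≤ (n:ℝ) + 1 := by
        have : (2:ℝ) ≤ (n:ℝ) := by exact_mod_cast hn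
        linarith
      linarith
    have hpos : (0:ℝ) < ((11:ℝ)/5) ^ (n - 2) := by positivity
    calc ((11:ℝ)/5) ^ (n-2) * (11/5) ≤ ((9/16) * (Nat.factorial n : ℝ)) * ((n:ℝ)+1) := by
          apply mul_le_mul ih h3 (by norm_num) (by positivity)
      _ = (9/16) * (((n:ℕ)+1 : ℝ) * (Nat.factorial n : ℝ)) := by ring
      _ = (9/16) * ((Nat.factorial (n+1) : ℝ)) := by
          rw [Nat.factorial_succ]; push_cast; ring

private lemma key_ineq (ℓ : ℕ) (hℓ : 2 ≤ ℓ) (s : ℝ) (hs : 0 ≤ s) :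
    s ^ ℓ ≤ (9/64) * (Nat.factorial ℓ : ℝ) * (Real.exp s - Real.exp (-s)) ^ 2 := by
  have hsinh : 2 * s ≤ Real.exp s - Real.exp (-s) := by
    have := Real.self_le_sinh_iff.mpr hs
    rw [Real.sinh_eq] at this
    linarith
  rcases le_or_gt s (11/5) with hcase | hcase
  · -- small s
    have hdecomp : s ^ ℓ = s ^ 2 * s ^ (ℓ - 2) := by
      rw [← pow_add]; congr 1; omega
    have h1 : s ^ 2 ≤ (1/4) * (Real.exp s - Real.exp (-s)) ^ 2 := by
      nlinarith [hsinh, hs]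
    have h2 : s ^ (ℓ - 2) ≤ (9/16) * (Nat.factorial ℓ : ℝ) :=
      le_trans (pow_le_pow_left₀ hs hcase _) (aux_pow_le_factorial ℓ hℓ)
    have hq : (0:ℝ) ≤ (Real.exp s - Real.exp (-s))^2 := sq_nonneg _
    calc s ^ ℓ = s ^ 2 * s ^ (ℓ - 2) := hdecomp
      _ ≤ ((1/4) * (Real.exp s - Real.exp (-s)) ^ 2) * ((9/16) * (Nat.factorial ℓ : ℝ)) :=
          mul_le_mul h1 h2 (by positivity) (by positivity)
      _ = (9/64) * (Nat.factorial ℓ : ℝ) * (Real.exp s - Real.exp (-s)) ^ 2 := by ring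
  · -- large s
    have hpf : s ^ ℓ ≤ (Nat.factorial ℓ : ℝ) * Real.exp s := by
      have h := Real.pow_div_factorial_le_exp (x := s) hs ℓ
      have hfac : (0:ℝ) < (Nat.factorial ℓ : ℝ) := by positivity
      rw [div_le_iff₀ hfac] at h
      linarith [h]
    have hw8 : (8:ℝ) ≤ Real.exp s := by
      have h22 : Real.exp (11/5) ≤ Real.exp s := Real.exp_le_exp.mpr hcase.le
      have he1 : (2.7182818283 : ℝ) < Real.exp 1 := Real.exp_one_gt_d9
      have hsplit : Real.exp (11/5 : ℝ) = Real.exp 1 * Real.exp 1 * Real.exp (1/5) := by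
        rw [← Real.exp_add, ← Real.exp_add]; norm_num
      have he02 : (1 + (1/5 : ℝ)) ≤ Real.exp (1/5) := by
        have := Real.add_one_le_exp ((1:ℝ)/5); linarith
      have hep : (0:ℝ) < Real.exp 1 := Real.exp_pos 1
      nlinarith [h22, he1, he02, hep, hsplit]
    have hexp_bound : Real.exp s ≤ (9/64) * (Real.exp s - Real.exp (-s)) ^ 2 := by
      have hinv : Real.exp (-s) = 1 / Real.exp s := by
        rw [Real.exp_neg]; ring
      set w := Real.exp s with hw
      have hwpos : 0 < w := Real.exp_pos s
      rw [hinv]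
      have key : 64 * w ^ 3 ≤ 9 * (w^2 - 1)^2 := by nlinarith [hw8, hwpos]
      have hexpand : (w - 1/w)^2 = (w^2-1)^2 / w^2 := by field_simp
      rw [hexpand, ← sub_nonneg]
      have heq : (9:ℝ)/64 * ((w^2-1)^2/w^2) - w = (9 * (w^2-1)^2 - 64 * w^3) / (64 * w^2) := by
        field_simp
      rw [heq]
      apply div_nonneg (by linarith) (by positivity)
    have hfac : (0:ℝ) ≤ (Nat.factorial ℓ : ℝ) := by positivity
    calc s ^ ℓ ≤ (Nat.factorial ℓ : ℝ) * Real.exp s := hpf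
      _ ≤ (Nat.factorial ℓ : ℝ) * ((9/64) * (Real.exp s - Real.exp (-s)) ^ 2) :=
          mul_le_mul_of_nonneg_left hexp_bound hfac
      _ = (9/64) * (Nat.factorial ℓ : ℝ) * (Real.exp s - Real.exp (-s)) ^ 2 := by ring

private lemma log_ratio_helper (ℓ : ℕ) (hℓ : 2 ≤ ℓ) (a b : ℝ) (hb : 0 < b) (hab : b ≤ a) :
    (Real.log (a / b)) ^ ℓ ≤
      (9 / 64) * 2 ^ ℓ * (Nat.factorial ℓ : ℝ) * (a - b) ^ 2 / (a * b) := by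
  have ha : 0 < a := lt_of_lt_of_le hb hab
  set L := Real.log (a / b) with hL
  have hL0 : 0 ≤ L := Real.log_nonneg ((one_le_div hb).mpr hab)
  set E := Real.exp (L / 2) with hE
  have hEpos : 0 < E := Real.exp_pos _
  have hE2 : E ^ 2 = a / b := by
    rw [hE, ← Real.exp_nat_mul]
    have h2 : ((2:ℕ):ℝ) * (L/2) = L := by push_cast; ring
    rw [h2, hL, Real.exp_log (by positivity)]
  have hs := key_ineq ℓ hℓ (L/2) (by linarith)
  have hEinv : Real.exp (-(L/2)) = 1/E := by rw [Real.exp_neg, hE]; ring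
  rw [hEinv] at hs
  have hsq : (E - 1/E)^2 = (a - b)^2 / (a * b) := by
    have h1 : (E - 1/E)^2 = (E^2 - 1)^2 / E^2 := by field_simp
    rw [h1, hE2]
    field_simp
  have hLpow : L ^ ℓ = 2 ^ ℓ * (L/2) ^ ℓ := by
    rw [div_pow, ← mul_div_assoc]
    field_simp
  rw [hLpow]
  calc 2 ^ ℓ * (L/2) ^ ℓ ≤ 2 ^ ℓ * ((9/64) * (Nat.factorial ℓ : ℝ) * (E - 1/E) ^ 2) := by
        apply mul_le_mul_of_nonneg_left hs (by positivity)
    _ = (9 / 64) * 2 ^ ℓ * (Nat.factorial ℓ : ℝ) * ((a - b) ^ 2 / (a * b)) := by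
        rw [hsq]; ring
    _ = (9 / 64) * 2 ^ ℓ * (Nat.factorial ℓ : ℝ) * (a - b) ^ 2 / (a * b) := by ring

/-- pointwise log-power ratio bound. For `ℓ ≥ 2`, `x, y ≥ 0`, `z > 0`,
`|log((z+x)/(z+y))|^ℓ ≤ (9/64) 2^ℓ ℓ! (x−y)² / ((z+x)(z+y))`. -/
theorem abs_log_ratio_pow_le (ℓ : ℕ) (hℓ : 2 ≤ ℓ) (x y z : ℝ)
    (hx : 0 ≤ x) (hy : 0 ≤ y) (hz : 0 < z) :
    |Real.log ((z + x) / (z + y))| ^ ℓ ≤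
      (9 / 64) * 2 ^ ℓ * (Nat.factorial ℓ : ℝ) * (x - y) ^ 2 / ((z + x) * (z + y)) := by
  have ha : 0 < z + x := by linarith
  have hb : 0 < z + y := by linarith
  rcases le_total y x with hxy | hxy
  · have hab : z + y ≤ z + x := by linarith
    have h := log_ratio_helper ℓ hℓ (z + x) (z + y) hb hab
    have habs : |Real.log ((z + x) / (z + y))| = Real.log ((z + x) / (z + y)) :=
      abs_of_nonneg (Real.log_nonneg ((one_le_div hb).mpr hab))
    rw [habs]
    have : (z + x - (z + y)) = x - y := by ring
    rw [this] at h
    exact h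
  · have hab : z + x ≤ z + y := by linarith
    have h := log_ratio_helper ℓ hℓ (z + y) (z + x) ha hab
    have hflip : Real.log ((z + x) / (z + y)) = - Real.log ((z + y) / (z + x)) := by
      rw [← Real.log_inv]
      congr 1
      field_simp
    have habs : |Real.log ((z + x) / (z + y))| = Real.log ((z + y) / (z + x)) := by
      rw [hflip, abs_neg, abs_of_nonneg (Real.log_nonneg ((one_le_div ha).mpr hab))]
    rw [habs]
    have h1 : (z + y - (z + x)) = -(x - y) := by ring
    rw [h1, neg_pow, show ((-1:ℝ))^2 = 1 by norm_num, one_mul] at h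
    have h2 : (z + y) * (z + x) = (z + x) * (z + y) := by ring
    rw [h2] at h
    exact h
end

section
/- Moment bound by Hellinger distance: Let μ be a σ-finite measure on a measurable space and let p, q, r be probability densities with respect to μ (nonnegative measurable functions integrating to 1), with p > 0 μ-almost everywhere. Then for every integer ℓ ≥ 2, ∫ | log( (p + q)/(p + r) ) |^ℓ · p dμ ≤ (9/64) · 2^ℓ · ℓ! · ∫ ( √q − √r )² dμ. -/
open MeasureTheory

lemma exp_sub_exp_neg_ge (y : ℝ) (hy : 0 ≤ y) : 2 * y ≤ Real.exp y - Real.exp (-y) := by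
  have h1 : 1 + y + y^2/2 ≤ Real.exp y := by
    have := Real.sum_le_exp_of_nonneg hy 3
    simp [Finset.sum_range_succ] at this
    nlinarith [this]
  have h2 : Real.exp (-y) = (Real.exp y)⁻¹ := Real.exp_neg y
  have h3 : 0 < Real.exp y := Real.exp_pos y
  have h4 : Real.exp y - Real.exp (-y) ≥ Real.exp y - (1 + y + y^2/2)⁻¹ := by
    rw [h2]
    have hp : (0:ℝ) < 1 + y + y^2/2 := by nlinarith
    have : (Real.exp y)⁻¹ ≤ (1 + y + y^2/2)⁻¹ := by
      apply inv_anti₀ hp h1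
    linarith
  have hp : (0:ℝ) < 1 + y + y^2/2 := by nlinarith
  have h5 : (1 + y + y^2/2) - (1 + y + y^2/2)⁻¹ ≥ 2 * y := by
    rw [ge_iff_le, ← sub_nonneg]
    have : (1 + y + y^2/2) - (1 + y + y^2/2)⁻¹ - 2*y
        = ((1 + y + y^2/2)^2 - 1 - 2*y*(1 + y + y^2/2)) / (1 + y + y^2/2) := by
      field_simp
    rw [this]
    apply div_nonneg _ hp.le
    nlinarith [sq_nonneg y]
  nlinarith [h1, h4, h5]

lemma key_series (ℓ : ℕ) (hℓ : 2 ≤ ℓ) (s : ℝ) (hs : 0 ≤ s) :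
    2 * s ^ ℓ ≤ (Nat.factorial ℓ : ℝ) * (Real.exp s + Real.exp (-s) - 2) := by
  rcases eq_or_lt_of_le hℓ with h2 | h3
  · -- ℓ = 2
    subst h2
    have hy : 0 ≤ s/2 := by linarith
    have h := exp_sub_exp_neg_ge (s/2) hy
    have e1 : Real.exp (s/2) * Real.exp (-(s/2)) = 1 := by
      rw [← Real.exp_add]; simp
    have e2 : Real.exp (s/2) * Real.exp (s/2) = Real.exp s := by
      rw [← Real.exp_add]; ring_nf
    have e3 : Real.exp (-(s/2)) * Real.exp (-(s/2)) = Real.exp (-s) := by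
      rw [← Real.exp_add]; ring_nf
    have : (Real.exp (s/2) - Real.exp (-(s/2)))^2 = Real.exp s + Real.exp (-s) - 2 := by
      nlinarith [e1, e2, e3]
    simp [Nat.factorial]
    nlinarith [this, h, Real.exp_pos (s/2), Real.exp_pos (-(s/2))]
  · -- ℓ ≥ 3
    obtain ⟨m, rfl⟩ : ∃ m, ℓ = m + 3 := ⟨ℓ - 3, by omega⟩
    have h1 : ∑ k ∈ Finset.range (m + 5), s ^ k / (Nat.factorial k : ℝ) ≤ Real.exp s :=
      Real.sum_le_exp_of_nonneg hs _
    have h2 : 1 - s ≤ Real.exp (-s) := by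
      have := Real.add_one_le_exp (-s); linarith
    -- peel the top three terms
    have hpeel : ∑ k ∈ Finset.range (m + 5), s ^ k / (Nat.factorial k : ℝ)
        = (∑ k ∈ Finset.range (m + 2), s ^ k / (Nat.factorial k : ℝ))
          + s ^ (m+2) / (Nat.factorial (m+2) : ℝ)
          + s ^ (m+3) / (Nat.factorial (m+3) : ℝ)
          + s ^ (m+4) / (Nat.factorial (m+4) : ℝ) := by
      rw [Finset.sum_range_succ, Finset.sum_range_succ, Finset.sum_range_succ]
    have hlow : 1 + s ≤ ∑ k ∈ Finset.range (m + 2), s ^ k / (Nat.factorial k : ℝ) := by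
      have hsub : Finset.range 2 ⊆ Finset.range (m + 2) := Finset.range_subset_range.2 (by omega)
      have : ∑ k ∈ Finset.range 2, s ^ k / (Nat.factorial k : ℝ)
          ≤ ∑ k ∈ Finset.range (m + 2), s ^ k / (Nat.factorial k : ℝ) :=
        Finset.sum_le_sum_of_subset_of_nonneg hsub
          (fun i _ _ => div_nonneg (pow_nonneg hs i) (Nat.cast_nonneg _))
      have hev : ∑ k ∈ Finset.range 2, s ^ k / (Nat.factorial k : ℝ) = 1 + s := by
        simp [Finset.sum_range_succ]
      linarith [this, hev.ge, hev.le]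
    have hmain : 1 + s + s ^ (m+2) / (Nat.factorial (m+2) : ℝ)
          + s ^ (m+3) / (Nat.factorial (m+3) : ℝ)
          + s ^ (m+4) / (Nat.factorial (m+4) : ℝ) ≤ Real.exp s := by
      rw [hpeel] at h1
      linarith
    -- now conclude
    have hfac2 : (0:ℝ) < (Nat.factorial (m+2) : ℝ) := by positivity
    have hfac3 : ((Nat.factorial (m+3) : ℝ)) = (m+3) * (Nat.factorial (m+2) : ℝ) := by
      rw [Nat.factorial_succ]; push_cast; ring
    have hfac4 : ((Nat.factorial (m+4) : ℝ)) = (m+4) * (Nat.factorial (m+3) : ℝ) := by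
      rw [Nat.factorial_succ]; push_cast; ring
    have hrhs : (Nat.factorial (m+3) : ℝ) * (Real.exp s + Real.exp (-s) - 2)
        ≥ (Nat.factorial (m+3) : ℝ) * (s ^ (m+2) / (Nat.factorial (m+2) : ℝ)
          + s ^ (m+3) / (Nat.factorial (m+3) : ℝ)
          + s ^ (m+4) / (Nat.factorial (m+4) : ℝ)) := by
      have hf3 : (0:ℝ) ≤ (Nat.factorial (m+3) : ℝ) := by positivity
      apply mul_le_mul_of_nonneg_left _ hf3
      linarith [hmain, h2]
    have heval : (Nat.factorial (m+3) : ℝ) * (s ^ (m+2) / (Nat.factorial (m+2) : ℝ)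
          + s ^ (m+3) / (Nat.factorial (m+3) : ℝ)
          + s ^ (m+4) / (Nat.factorial (m+4) : ℝ))
        = (m+3) * s^(m+2) + s^(m+3) + s^(m+4) / (m+4) := by
      have hfac3' : (0:ℝ) < (Nat.factorial (m+3) : ℝ) := by positivity
      have hfac4' : (0:ℝ) < (Nat.factorial (m+4) : ℝ) := by positivity
      rw [hfac4, hfac3]
      field_simp
    have hquad : 2 * s ^ (m+3) ≤ (m+3) * s^(m+2) + s^(m+3) + s^(m+4) / (m+4) := by
      have hpow : (0:ℝ) ≤ s ^ (m+2) := by positivity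
      have e3 : s ^ (m+3) = s * s ^ (m+2) := by ring
      have e4 : s ^ (m+4) = s^2 * s ^ (m+2) := by ring
      have hm4 : (0:ℝ) < (m:ℝ) + 4 := by positivity
      rw [e3, e4, ← sub_nonneg]
      have expand : ((m:ℝ)+3) * s^(m+2) + s * s^(m+2) + s^2 * s^(m+2) / ((m:ℝ)+4)
            - 2 * (s * s^(m+2))
          = ((((m:ℝ)+3)*((m:ℝ)+4) + s^2 - s*((m:ℝ)+4)) * s^(m+2)) / ((m:ℝ)+4) := by
        field_simp; ring
      rw [expand]
      apply div_nonneg (mul_nonneg _ hpow) hm4.le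
      nlinarith [sq_nonneg (s - ((m:ℝ)+4)/2)]
    rw [heval] at hrhs
    push_cast at hrhs ⊢
    linarith [hrhs, hquad]

lemma pointwise_bound (ℓ : ℕ) (hℓ : 2 ≤ ℓ) (P Q R : ℝ)
    (hP : 0 < P) (hQ : 0 ≤ Q) (hR : 0 ≤ R) :
    |Real.log ((P + Q) / (P + R))| ^ ℓ * P
      ≤ (9 / 64) * 2 ^ ℓ * (Nat.factorial ℓ : ℝ) * (Real.sqrt Q - Real.sqrt R) ^ 2 := by
  have ha : 0 < P + Q := by linarith
  have hb : 0 < P + R := by linarith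
  set s := |Real.log ((P + Q) / (P + R))| with hsdef
  have hs : 0 ≤ s := abs_nonneg _
  have hexp : Real.exp s + Real.exp (-s) = (P+Q)/(P+R) + (P+R)/(P+Q) := by
    have hu : 0 < (P+Q)/(P+R) := div_pos ha hb
    have hinv : Real.log ((P+R)/(P+Q)) = - Real.log ((P+Q)/(P+R)) := by
      rw [← Real.log_inv]; congr 1; rw [inv_div]
    rcases abs_cases (Real.log ((P + Q) / (P + R))) with ⟨h1, _⟩ | ⟨h1, _⟩
    · rw [hsdef, h1, Real.exp_log hu, ← hinv, Real.exp_log (div_pos hb ha)]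
    · rw [hsdef, h1, ← hinv, Real.exp_log (div_pos hb ha)]
      have hinv2 : -Real.log ((P+R)/(P+Q)) = Real.log ((P+Q)/(P+R)) := by rw [hinv]; ring
      rw [hinv2, Real.exp_log hu]
      ring
  have key := key_series ℓ hℓ s hs
  rw [hexp] at key
  have hd : (P+Q)/(P+R) + (P+R)/(P+Q) - 2 = (Q - R)^2 / ((P+Q)*(P+R)) := by
    field_simp
    ring
  rw [hd] at key
  -- Cauchy-Schwarz: P * (√Q + √R)^2 ≤ (P+Q)(P+R)
  have hsQ : Real.sqrt Q ^ 2 = Q := Real.sq_sqrt hQ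
  have hsR : Real.sqrt R ^ 2 = R := Real.sq_sqrt hR
  have hsQ0 : 0 ≤ Real.sqrt Q := Real.sqrt_nonneg _
  have hsR0 : 0 ≤ Real.sqrt R := Real.sqrt_nonneg _
  have hCS : P * (Real.sqrt Q + Real.sqrt R)^2 ≤ (P+Q)*(P+R) := by
    nlinarith [sq_nonneg (P - Real.sqrt Q * Real.sqrt R)]
  have hfac : (Q - R)^2 = (Real.sqrt Q - Real.sqrt R)^2 * (Real.sqrt Q + Real.sqrt R)^2 := by
    nlinarith [hsQ, hsR]
  have hab : 0 < (P+Q)*(P+R) := mul_pos ha hb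
  -- multiply key by (P+Q)(P+R)
  have key2 : 2 * s ^ ℓ * ((P+Q)*(P+R))
      ≤ (Nat.factorial ℓ : ℝ) * ((Real.sqrt Q - Real.sqrt R)^2 * (Real.sqrt Q + Real.sqrt R)^2) := by
    have := mul_le_mul_of_nonneg_right key hab.le
    have heq : (Nat.factorial ℓ : ℝ) * ((Q - R)^2 / ((P+Q)*(P+R))) * ((P+Q)*(P+R))
        = (Nat.factorial ℓ : ℝ) * (Q - R)^2 := by field_simp
    rw [heq, hfac] at this
    linarith
  -- combine
  have step1 : 2 * (s ^ ℓ * P) * ((P+Q)*(P+R))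
      ≤ ((Nat.factorial ℓ : ℝ) * (Real.sqrt Q - Real.sqrt R)^2) * ((P+Q)*(P+R)) := by
    calc 2 * (s ^ ℓ * P) * ((P+Q)*(P+R)) = (2 * s ^ ℓ * ((P+Q)*(P+R))) * P := by ring
      _ ≤ ((Nat.factorial ℓ : ℝ) * ((Real.sqrt Q - Real.sqrt R)^2 * (Real.sqrt Q + Real.sqrt R)^2)) * P :=
          mul_le_mul_of_nonneg_right key2 hP.le
      _ = ((Nat.factorial ℓ : ℝ) * (Real.sqrt Q - Real.sqrt R)^2) * (P * (Real.sqrt Q + Real.sqrt R)^2) := by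
          ring
      _ ≤ ((Nat.factorial ℓ : ℝ) * (Real.sqrt Q - Real.sqrt R)^2) * ((P+Q)*(P+R)) := by
          apply mul_le_mul_of_nonneg_left hCS
          positivity
  have step2 : 2 * (s ^ ℓ * P) ≤ (Nat.factorial ℓ : ℝ) * (Real.sqrt Q - Real.sqrt R)^2 :=
    le_of_mul_le_mul_right (by linarith [step1]) hab
  have h2pow : (4:ℝ) ≤ 2 ^ ℓ := by
    calc (4:ℝ) = 2 ^ 2 := by norm_num
      _ ≤ 2 ^ ℓ := pow_le_pow_right₀ (by norm_num) hℓ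
  have hfℓ : (0:ℝ) ≤ (Nat.factorial ℓ : ℝ) := by positivity
  have hdd : (0:ℝ) ≤ (Real.sqrt Q - Real.sqrt R)^2 := sq_nonneg _
  nlinarith [mul_le_mul_of_nonneg_right (mul_le_mul_of_nonneg_right h2pow hfℓ) hdd]


/-- moment bound by Hellinger distance. For probability densities
`p, q, r` w.r.t. a σ-finite measure `μ` with `p > 0` a.e. and every integer `ℓ ≥ 2`,
`∫ |log((p+q)/(p+r))|^ℓ p dμ ≤ (9/64) 2^ℓ ℓ! ∫ (√q − √r)² dμ`. -/
theorem moment_bound_by_hellinger {X : Type*} [MeasurableSpace X] (μ : Measure X)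
    [SigmaFinite μ] (p q r : X → ℝ)
    (hpm : Measurable p) (hqm : Measurable q) (hrm : Measurable r)
    (hp0 : ∀ x, 0 ≤ p x) (hq0 : ∀ x, 0 ≤ q x) (hr0 : ∀ x, 0 ≤ r x)
    (hp1 : ∫ x, p x ∂μ = 1) (hq1 : ∫ x, q x ∂μ = 1) (hr1 : ∫ x, r x ∂μ = 1)
    (hppos : ∀ᵐ x ∂μ, 0 < p x)
    (ℓ : ℕ) (hℓ : 2 ≤ ℓ) :
    ∫⁻ x, ENNReal.ofReal
        (|Real.log ((p x + q x) / (p x + r x))| ^ ℓ * p x) ∂μ ≤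
      ENNReal.ofReal ((9 / 64) * 2 ^ ℓ * (Nat.factorial ℓ : ℝ)) *
        ∫⁻ x, ENNReal.ofReal ((Real.sqrt (q x) - Real.sqrt (r x)) ^ 2) ∂μ := by
  have hC : (0:ℝ) ≤ (9 / 64) * 2 ^ ℓ * (Nat.factorial ℓ : ℝ) := by positivity
  calc ∫⁻ x, ENNReal.ofReal (|Real.log ((p x + q x) / (p x + r x))| ^ ℓ * p x) ∂μ
      ≤ ∫⁻ x, ENNReal.ofReal ((9 / 64) * 2 ^ ℓ * (Nat.factorial ℓ : ℝ)
          * (Real.sqrt (q x) - Real.sqrt (r x)) ^ 2) ∂μ := by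
        apply MeasureTheory.lintegral_mono_ae
        filter_upwards [hppos] with x hx
        exact ENNReal.ofReal_le_ofReal
          (pointwise_bound ℓ hℓ (p x) (q x) (r x) hx (hq0 x) (hr0 x))
    _ = ENNReal.ofReal ((9 / 64) * 2 ^ ℓ * (Nat.factorial ℓ : ℝ)) *
        ∫⁻ x, ENNReal.ofReal ((Real.sqrt (q x) - Real.sqrt (r x)) ^ 2) ∂μ := by
        simp_rw [ENNReal.ofReal_mul hC]
        exact MeasureTheory.lintegral_const_mul' _ _ ENNReal.ofReal_ne_top
end
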